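/- For each positive integer l, the graph G_l obtained by identifying one vertex of the complete graph K_{l+2} with one corner vertex of the grid graph P_{l+1} × P_2 (the Cartesian product of paths) satisfies p(G_l) = l and k(G_l) = 1. -/

import Mathlib

open SimpleGraph

/-- Adjacency in the phylogeny graph of a digraph `D`: `u ≠ v` and either an arc between
them or a common out-neighbor. -/
def phyAdj {α : Type*} (D : α → α → Prop) (u v : α) : Prop :=
  u ≠ v ∧ (D u v ∨ D v u ∨ ∃ w, D u w ∧ D v w)

/-- `D`, a digraph on the vertices of `G` together with `r` extra vertices, is a
phylogeny digraph for `G`: it is acyclic, `G` is the subgraph of the phylogeny graph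
induced on `V(G)`, and there are no arcs from the extra vertices into `V(G)`. -/
def IsPhyDigraphOn {V : Type*} (G : SimpleGraph V) (r : ℕ)
    (D : (V ⊕ Fin r) → (V ⊕ Fin r) → Prop) : Prop :=
  (∀ x, ¬ Relation.TransGen D x x) ∧
  (∀ u v : V, G.Adj u v ↔ phyAdj D (Sum.inl u) (Sum.inl v)) ∧
  (∀ (j : Fin r) (v : V), ¬ D (Sum.inr j) (Sum.inl v))

/-- The phylogeny number `p(G)`: the least number of extra vertices in a phylogeny
digraph for `G`. -/
noncomputable def phylogenyNumber {V : Type*} (G : SimpleGraph V) : ℕ :=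
  sInf {r | ∃ D, IsPhyDigraphOn G r D}

/-- The competition number `k(G)`: the least `k` so that `G` together with `k` isolated
vertices is the competition graph of an acyclic digraph. -/
noncomputable def competitionNumber {V : Type*} (G : SimpleGraph V) : ℕ :=
  sInf {k | ∃ D : (V ⊕ Fin k) → (V ⊕ Fin k) → Prop,
    (∀ x, ¬ Relation.TransGen D x x) ∧
    (∀ a b, (a ≠ b ∧ ∃ c, D a c ∧ D b c) ↔
      (∃ u v : V, a = Sum.inl u ∧ b = Sum.inl v ∧ G.Adj u v))}

/-- The number of triangles of `G`. -/
noncomputable def triangleCount {V : Type*} (G : SimpleGraph V) : ℕ :=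
  Set.ncard {S : Finset V | G.IsNClique 3 S}

/-- `S` carries a diamond (`K₄` minus an edge) subgraph of `G`. -/
def IsDiamondOn {V : Type*} (G : SimpleGraph V) (S : Finset V) : Prop :=
  ∃ x y z w : V, (S : Set V) = {x, y, z, w} ∧
    x ≠ y ∧ x ≠ z ∧ x ≠ w ∧ y ≠ z ∧ y ≠ w ∧ z ≠ w ∧
    G.Adj x y ∧ G.Adj x z ∧ G.Adj x w ∧ G.Adj y z ∧ G.Adj z w ∧ ¬ G.Adj y w

/-- The number of diamonds of `G`. -/
noncomputable def diamondCount {V : Type*} (G : SimpleGraph V) : ℕ :=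
  Set.ncard {S : Finset V | IsDiamondOn G S}

/-- The diamonds of `G` are mutually edge-disjoint. -/
def EdgeDisjointDiamonds {V : Type*} (G : SimpleGraph V) : Prop :=
  ∀ S₁ S₂ : Finset V, IsDiamondOn G S₁ → IsDiamondOn G S₂ → S₁ ≠ S₂ →
    ∀ u v, G.Adj u v → u ∈ S₁ → v ∈ S₁ → u ∈ S₂ → v ∈ S₂ → False

/-- `G⁻`: the graph obtained from `G` by deleting every edge lying on a triangle. -/
def triangleEdgeDeleted {V : Type*} (G : SimpleGraph V) : SimpleGraph V where
  Adj u v := G.Adj u v ∧ ∀ w, ¬ (G.Adj u w ∧ G.Adj v w)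
  symm := ⟨fun u v h => ⟨h.1.symm, fun w hw => h.2 w ⟨hw.2, hw.1⟩⟩⟩
  loopless := ⟨fun v h => G.loopless.irrefl v h.1⟩

/-- The edge clique cover number `θₑ(G)`. -/
noncomputable def edgeCliqueCoverNumber {V : Type*} (G : SimpleGraph V) : ℕ :=
  sInf {n | ∃ F : Fin n → Set V, (∀ i, G.IsClique (F i)) ∧
    ∀ u v, G.Adj u v → ∃ i, u ∈ F i ∧ v ∈ F i}

/-- `s` is a maximal clique of the graph `G`. -/
def IsMaxCliqueOf {V : Type*} (G : SimpleGraph V) (s : Set V) : Prop :=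
  G.IsClique s ∧ ∀ t, G.IsClique t → s ⊆ t → s = t

/-- `s` is a clique of the subgraph `H` of `G`. -/
def CliqueInSub {V : Type*} {G : SimpleGraph V} (H : G.Subgraph) (s : Set V) : Prop :=
  s ⊆ H.verts ∧ s.Pairwise H.Adj

/-- `s` is a maximal clique of the subgraph `H` of `G`. -/
def MaxCliqueInSub {V : Type*} {G : SimpleGraph V} (H : G.Subgraph) (s : Set V) : Prop :=
  CliqueInSub H s ∧ ∀ t, CliqueInSub H t → s ⊆ t → s = t

/-- `s` is a clique of the graph with adjacency `X` and vertex set `S`. -/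
def CliqueRel {α : Type*} (X : SimpleGraph α) (S s : Set α) : Prop :=
  s ⊆ S ∧ X.IsClique s

/-- `s` is a maximal clique of the graph with adjacency `X` and vertex set `S`. -/
def MaxCliqueRel {α : Type*} (X : SimpleGraph α) (S s : Set α) : Prop :=
  CliqueRel X S s ∧ ∀ t, CliqueRel X S t → s ⊆ t → s = t

/-- `v` is a cut-vertex of `G`: some two other vertices are connected in `G` but every
walk between them passes through `v`. -/
def IsCutVertex {V : Type*} (G : SimpleGraph V) (v : V) : Prop :=
  ∃ u w, u ≠ v ∧ w ≠ v ∧ G.Reachable u w ∧ ∀ p : G.Walk u w, v ∈ p.support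

/-- `B` is a block of `G`: a maximal connected subgraph without a cut-vertex. -/
def IsBlockSub {V : Type*} {G : SimpleGraph V} (B : G.Subgraph) : Prop :=
  B.coe.Connected ∧ (∀ v, ¬ IsCutVertex B.coe v) ∧
  ∀ B' : G.Subgraph, B ≤ B' → B'.coe.Connected →
    (∀ v, ¬ IsCutVertex B'.coe v) → B' = B

/-- The adjacency generating relation of the graph `G_l`: a complete graph on the
`l+1` vertices `Sum.inl a` together with the corner vertex `Sum.inr (0,0)` of the
ladder `P_{l+1} × P_2` placed on the vertices `Sum.inr (i, j)`. -/
def GlRel (l : ℕ) :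
    (Fin (l+1) ⊕ (Fin (l+1) × Fin 2)) → (Fin (l+1) ⊕ (Fin (l+1) × Fin 2)) → Prop
  | Sum.inl _, Sum.inl _ => True
  | Sum.inl _, Sum.inr c => c = (0, 0)
  | Sum.inr c, Sum.inl _ => c = (0, 0)
  | Sum.inr a, Sum.inr b => (a.1 = b.1 ∧ a.2 ≠ b.2) ∨
      (a.2 = b.2 ∧ ((a.1 : ℕ) + 1 = b.1 ∨ (b.1 : ℕ) + 1 = a.1))

/-- The graph `G_l`: `K_{l+2}` with one vertex identified with a corner vertex of the
Cartesian product `P_{l+1} × P_2`. -/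
def Gl (l : ℕ) : SimpleGraph (Fin (l+1) ⊕ (Fin (l+1) × Fin 2)) :=
  SimpleGraph.fromRel (GlRel l)

section Aux
variable {l : ℕ}

abbrev GlV (l : ℕ) := Fin (l+1) ⊕ (Fin (l+1) × Fin 2)

/-- ladder adjacency -/
def ladAdj (l : ℕ) (p q : Fin (l+1) × Fin 2) : Prop :=
  (p.1 = q.1 ∧ p.2 ≠ q.2) ∨ (p.2 = q.2 ∧ ((p.1 : ℕ) + 1 = q.1 ∨ (q.1 : ℕ) + 1 = p.1))

lemma ladAdj_symm {p q} (h : ladAdj l p q) : ladAdj l q p := by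
  unfold ladAdj at *; tauto

lemma ladAdj_ne {p q} (h : ladAdj l p q) : p ≠ q := by
  rintro rfl
  rcases h with ⟨_, h⟩ | ⟨_, h | h⟩ <;> omega

lemma adj_inr_inr {p q : Fin (l+1) × Fin 2} :
    (Gl l).Adj (Sum.inr p) (Sum.inr q) ↔ ladAdj l p q := by
  constructor
  · rintro ⟨hne, h | h⟩
    · exact h
    · exact ladAdj_symm h
  · intro h
    exact ⟨by simpa using (ladAdj_ne h), Or.inl h⟩

lemma adj_inl_inl {a b : Fin (l+1)} :
    (Gl l).Adj (Sum.inl a) (Sum.inl b) ↔ a ≠ b := by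
  constructor
  · rintro ⟨hne, _⟩ rfl; exact hne rfl
  · intro h; exact ⟨by simpa using h, Or.inl trivial⟩

lemma adj_inl_inr {a : Fin (l+1)} {p : Fin (l+1) × Fin 2} :
    (Gl l).Adj (Sum.inl a) (Sum.inr p) ↔ p = (0, 0) := by
  constructor
  · rintro ⟨hne, h | h⟩ <;> exact h
  · intro h; exact ⟨by simp, Or.inl h⟩

end Aux
section Aux2
variable {l : ℕ}

/-- no triangle contains a ladder edge -/
lemma noTri {p q : Fin (l+1) × Fin 2} (h : ladAdj l p q) :
    ∀ x : GlV l, ¬ ((Gl l).Adj x (Sum.inr p) ∧ (Gl l).Adj x (Sum.inr q)) := by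
  rintro (a | z) ⟨h1, h2⟩
  · rw [adj_inl_inr] at h1 h2
    · exact ladAdj_ne h (h1.trans h2.symm)
  · rw [adj_inr_inr] at h1 h2
    have e1 : (z.1 : ℕ) < l + 1 := z.1.isLt
    have e2 : (z.2 : ℕ) < 2 := z.2.isLt
    have e3 : (p.2 : ℕ) < 2 := p.2.isLt
    have e4 : (q.2 : ℕ) < 2 := q.2.isLt
    have hne1 := ladAdj_ne h1
    have hne2 := ladAdj_ne h2
    have hne3 := ladAdj_ne h
    simp only [ladAdj, Fin.ext_iff, Prod.ext_iff, ne_eq, not_and] at *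
    omega

/-- strict rank implies acyclic -/
lemma rank_acyclic {α : Type*} {D : α → α → Prop} (ρ : α → ℕ)
    (h : ∀ x y, D x y → ρ x < ρ y) : ∀ x, ¬ Relation.TransGen D x x := by
  have key : ∀ x y, Relation.TransGen D x y → ρ x < ρ y := by
    intro x y hxy
    induction hxy with
    | single h' => exact h _ _ h'
    | tail _ h' ih => exact ih.trans (h _ _ h')
  intro x hx
  exact lt_irrefl _ (key x x hx)

/-- a "predecessor" function on a finite type forces a cycle -/
lemma cycle_of_pred {α : Type*} [Fintype α] [Nonempty α] {R : α → α → Prop}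
    (f : α → α) (hf : ∀ x, R (f x) x) : ∃ x, Relation.TransGen R x x := by
  obtain ⟨x0, _⟩ := exists_true_iff_nonempty.2 ‹Nonempty α›
  have : ¬ Function.Injective fun n : Fin (Fintype.card α + 1) => f^[n] x0 := by
    intro hinj
    have := Fintype.card_le_of_injective _ hinj
    simp at this
  rw [Function.not_injective_iff] at this
  obtain ⟨m, k, hmk, hne⟩ := this
  wlog hlt : (k : ℕ) < m generalizing m k
  · exact this k m hmk.symm (Ne.symm hne) (by omega)
  have step : ∀ j : ℕ, 0 < j → Relation.TransGen R (f^[j] (f^[(k:ℕ)] x0)) (f^[(k:ℕ)] x0) := by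
    intro j hj
    induction j with
    | zero => omega
    | succ n ih =>
      rcases Nat.eq_zero_or_pos n with rfl | hn
      · exact Relation.TransGen.single (by simpa using hf _)
      · have : f^[n+1] (f^[(k:ℕ)] x0) = f (f^[n] (f^[(k:ℕ)] x0)) :=
          Function.iterate_succ_apply' f n _
        rw [this]
        exact Relation.TransGen.head (hf _) (ih hn)
  refine ⟨f^[(k:ℕ)] x0, ?_⟩
  have hjj : f^[(m:ℕ) - k] (f^[(k:ℕ)] x0) = f^[(k:ℕ)] x0 := by
    rw [← Function.iterate_add_apply]
    have : (m:ℕ) - k + k = m := by omega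
    rw [this, hmk]
  have := step ((m:ℕ) - k) (by omega)
  rwa [hjj] at this

lemma transGen_lift {α β : Type*} {R : α → α → Prop} {D : β → β → Prop} (g : α → β)
    (h : ∀ a b, R a b → D (g a) (g b)) {x y : α} (hxy : Relation.TransGen R x y) :
    Relation.TransGen D (g x) (g y) := by
  induction hxy with
  | single h' => exact Relation.TransGen.single (h _ _ h')
  | tail _ h' ih => exact Relation.TransGen.tail ih (h _ _ h')

end Aux2
section PhyUpper

/-- digraph realizing `p(G_l) ≤ l` -/
def Dp (l : ℕ) : (GlV l ⊕ Fin l) → (GlV l ⊕ Fin l) → Prop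
  | Sum.inl (Sum.inr p), Sum.inl (Sum.inr q) =>
      (p.1 = q.1 ∧ p.2 = 0 ∧ q.2 = 1) ∨ (p.2 = 0 ∧ q.2 = 0 ∧ (q.1 : ℕ) + 1 = p.1)
  | Sum.inl (Sum.inr p), Sum.inl (Sum.inl _) => p = (0, 0)
  | Sum.inl (Sum.inl a), Sum.inl (Sum.inl b) => a < b
  | Sum.inl (Sum.inr p), Sum.inr k => p.2 = 1 ∧ ((p.1 : ℕ) = k ∨ (p.1 : ℕ) = (k : ℕ) + 1)
  | _, _ => False

variable {l : ℕ}

lemma fin2cases : ∀ j : Fin 2, j = 0 ∨ j = 1 := by decide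

def ρp (l : ℕ) : (GlV l ⊕ Fin l) → ℕ
  | Sum.inl (Sum.inr p) => if p.2 = 0 then l - p.1 else l + 1
  | Sum.inl (Sum.inl a) => l + 3 + a
  | Sum.inr _ => l + 2

lemma Dp_rank : ∀ x y, Dp l x y → ρp l x < ρp l y := by
  rintro ((a | p) | k) ((b | q) | m) h <;>
    simp only [Dp] at h <;> simp only [ρp]
  · omega
  · subst h; simp; omega
  · have hp := p.1.isLt
    have hq := q.1.isLt
    have hne10 : ¬ ((1 : Fin 2) = 0) := by decide
    rcases h with ⟨h1, h2, h3⟩ | ⟨h1, h2, h3⟩ <;>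
      simp [h1, h2, h3, hne10, Fin.ext_iff] <;> omega
  · rcases h with ⟨h1, h2⟩
    simp [h1]

lemma Dp_acyclic : ∀ x, ¬ Relation.TransGen (Dp l) x x :=
  rank_acyclic (ρp l) Dp_rank

end PhyUpper
section PhyUpper2
variable {l : ℕ}

lemma Dp_arc_adj : ∀ {u v : GlV l}, Dp l (Sum.inl u) (Sum.inl v) → (Gl l).Adj u v := by
  rintro (a | p) (b | q) h <;> simp only [Dp] at h
  · exact adj_inl_inl.mpr (ne_of_lt h)
  · exact (adj_inl_inr.mpr h).symm
  · rw [adj_inr_inr]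
    rcases h with ⟨h1, h2, h3⟩ | ⟨h1, h2, h3⟩
    · exact Or.inl ⟨h1, by rw [h2, h3]; decide⟩
    · exact Or.inr ⟨by rw [h1, h2], Or.inr h3⟩

lemma Dp_phy : ∀ u v : GlV l, (Gl l).Adj u v ↔ phyAdj (Dp l) (Sum.inl u) (Sum.inl v) := by
  intro u v
  constructor
  · intro h
    refine ⟨by simpa using h.ne, ?_⟩
    match u, v with
    | Sum.inl a, Sum.inl b =>
      rcases lt_or_gt_of_ne (adj_inl_inl.mp h) with hab | hab
      · exact Or.inl hab
      · exact Or.inr (Or.inl hab)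
    | Sum.inl a, Sum.inr p =>
      exact Or.inr (Or.inl (adj_inl_inr.mp h))
    | Sum.inr p, Sum.inl a =>
      exact Or.inl (adj_inl_inr.mp h.symm)
    | Sum.inr p, Sum.inr q =>
      have hq1 := q.1.isLt
      have hp1 := p.1.isLt
      rcases adj_inr_inr.mp h with ⟨h1, h2⟩ | ⟨h1, h2⟩
      · rcases fin2cases p.2 with hp | hp <;> rcases fin2cases q.2 with hq | hq
        · exact absurd (hp.trans hq.symm) h2
        · exact Or.inl (Or.inl ⟨h1, hp, hq⟩)
        · exact Or.inr (Or.inl (Or.inl ⟨h1.symm, hq, hp⟩))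
        · exact absurd (hp.trans hq.symm) h2
      · rcases fin2cases p.2 with hp | hp
        · have hq : q.2 = 0 := h1 ▸ hp
          rcases h2 with h2 | h2
          · exact Or.inr (Or.inl (Or.inr ⟨hq, hp, h2⟩))
          · exact Or.inl (Or.inr ⟨hp, hq, h2⟩)
        · have hq : q.2 = 1 := h1 ▸ hp
          rcases h2 with h2 | h2
          · refine Or.inr (Or.inr ⟨Sum.inr ⟨(p.1 : ℕ), by omega⟩, ⟨hp, Or.inl rfl⟩,
              ⟨hq, Or.inr (by simp; omega)⟩⟩)
          · refine Or.inr (Or.inr ⟨Sum.inr ⟨(q.1 : ℕ), by omega⟩, ⟨hp, Or.inr (by simp; omega)⟩,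
              ⟨hq, Or.inl rfl⟩⟩)
  · rintro ⟨hne, harc⟩
    have hne' : u ≠ v := by simpa using hne
    rcases harc with h | h | ⟨w, h1, h2⟩
    · exact Dp_arc_adj h
    · exact (Dp_arc_adj h).symm
    · match u, v, w with
      | Sum.inl a, Sum.inl b, Sum.inl (Sum.inl c) =>
        exact adj_inl_inl.mpr (by simpa using hne')
      | Sum.inl a, Sum.inr p, Sum.inl (Sum.inl c) =>
        simp only [Dp] at h2; exact adj_inl_inr.mpr h2
      | Sum.inr p, Sum.inl a, Sum.inl (Sum.inl c) =>
        simp only [Dp] at h1; exact (adj_inl_inr.mpr h1).symm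
      | Sum.inr p, Sum.inr q, Sum.inl (Sum.inl c) =>
        simp only [Dp] at h1 h2
        exact absurd (h1.trans h2.symm) (by simpa using hne')
      | Sum.inl a, _, Sum.inl (Sum.inr q) => simp only [Dp] at h1
      | Sum.inr p, Sum.inl a, Sum.inl (Sum.inr q) => simp only [Dp] at h2
      | Sum.inr p, Sum.inr p', Sum.inl (Sum.inr q) =>
        exfalso
        apply hne'
        simp only [Dp] at h1 h2
        have hpp : p = p' := by
          rcases h1 with ⟨e1, e2, e3⟩ | ⟨e1, e2, e3⟩ <;>
            rcases h2 with ⟨f1, f2, f3⟩ | ⟨f1, f2, f3⟩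
          · exact Prod.ext (e1.trans f1.symm) (e2.trans f2.symm)
          · exact absurd (e3.symm.trans f2) (by decide)
          · exact absurd (f3.symm.trans e2) (by decide)
          · refine Prod.ext (Fin.ext ?_) (e1.trans f1.symm); omega
        rw [hpp]
      | Sum.inl a, _, Sum.inr k => simp only [Dp] at h1
      | Sum.inr p, Sum.inl a, Sum.inr k => simp only [Dp] at h2
      | Sum.inr p, Sum.inr p', Sum.inr k =>
        simp only [Dp] at h1 h2
        rw [adj_inr_inr]
        refine Or.inr ⟨h1.1.trans h2.1.symm, ?_⟩
        have hpp : ¬ ((p.1 : ℕ) = p'.1 ∧ (p.2 : ℕ) = p'.2) := by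
          intro hc
          exact hne' (congrArg Sum.inr (Prod.ext (Fin.ext hc.1) (Fin.ext hc.2)))
        rcases h1 with ⟨e1, e2⟩
        rcases h2 with ⟨f1, f2⟩
        have : (p.2 : ℕ) = 1 := by rw [e1]; rfl
        have : (p'.2 : ℕ) = 1 := by rw [f1]; rfl
        omega

lemma Dp_isPhy : IsPhyDigraphOn (Gl l) l (Dp l) := by
  refine ⟨Dp_acyclic, Dp_phy, ?_⟩
  intro j v h
  exact h

end PhyUpper2
section Comp
variable {l : ℕ}

/-- digraph realizing `k(G_l) ≤ 1` -/
def Dc (l : ℕ) : (GlV l ⊕ Fin 1) → (GlV l ⊕ Fin 1) → Prop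
  | Sum.inl (Sum.inr p), Sum.inl (Sum.inr q) =>
      (q.2 = 0 ∧ (p.1 : ℕ) + 1 = q.1) ∨
      (q.2 = 1 ∧ p.2 = 0 ∧ ((p.1 : ℕ) + 1 = q.1 ∨ p.1 = q.1))
  | Sum.inl (Sum.inr p), Sum.inl (Sum.inl m) =>
      (p.2 = 1 ∧ ((p.1 : ℕ) + 1 = m ∨ (p.1 : ℕ) = m) ∧ 1 ≤ (m : ℕ)) ∨
      ((m : ℕ) = 0 ∧ (p.1 : ℕ) = l)
  | Sum.inl (Sum.inr p), Sum.inr _ => p = (0, 0)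
  | Sum.inl (Sum.inl _), Sum.inr _ => True
  | _, _ => False

def ρc (l : ℕ) : (GlV l ⊕ Fin 1) → ℕ
  | Sum.inl (Sum.inr p) => 2 * p.1 + p.2
  | Sum.inl (Sum.inl m) => 2 * l + 2 + m
  | Sum.inr _ => 3 * l + 4

lemma Dc_rank : ∀ x y, Dc l x y → ρc l x < ρc l y := by
  have h2 : ∀ j : Fin 2, (j : ℕ) < 2 := fun j => j.isLt
  rintro ((a | p) | k) ((b | q) | m) h <;> simp only [Dc] at h <;> simp only [ρc]
  · have := a.isLt; omega
  · have := p.1.isLt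
    rcases h with ⟨e1, e2, _⟩ | ⟨e1, e2⟩
    · have : (p.2 : ℕ) = 1 := by rw [e1]; rfl
      omega
    · have := h2 p.2; omega
  · have := h2 p.2
    rcases h with ⟨e1, e2⟩ | ⟨e1, e2, e3⟩
    · have : (q.2 : ℕ) = 0 := by rw [e1]; rfl
      omega
    · have hq : (q.2 : ℕ) = 1 := by rw [e1]; rfl
      have hp : (p.2 : ℕ) = 0 := by rw [e2]; rfl
      rcases e3 with e | e
      · omega
      · have : (p.1 : ℕ) = q.1 := congrArg Fin.val e; omega
  · have := h2 p.2; have := p.1.isLt; omega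

lemma Dc_acyclic : ∀ x, ¬ Relation.TransGen (Dc l) x x :=
  rank_acyclic (ρc l) Dc_rank

end Comp
section Comp2
variable {l : ℕ}

lemma ne_lad {p p' : Fin (l+1) × Fin 2} (h : p ≠ p') :
    ¬ ((p.1 : ℕ) = p'.1 ∧ (p.2 : ℕ) = p'.2) :=
  fun hc => h (Prod.ext (Fin.ext hc.1) (Fin.ext hc.2))

lemma ladAdj_of_val {p q : Fin (l+1) × Fin 2}
    (h : ((p.1 : ℕ) = q.1 ∧ ¬ ((p.2 : ℕ) = q.2)) ∨
      ((p.2 : ℕ) = q.2 ∧ ((p.1 : ℕ) + 1 = q.1 ∨ (q.1 : ℕ) + 1 = p.1))) : ladAdj l p q := by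
  unfold ladAdj
  rcases h with ⟨h1, h2⟩ | ⟨h1, h2⟩
  · exact Or.inl ⟨Fin.ext h1, fun hc => h2 (congrArg Fin.val hc)⟩
  · exact Or.inr ⟨Fin.ext h1, h2⟩

lemma Dc_comp : ∀ a b, (a ≠ b ∧ ∃ c, Dc l a c ∧ Dc l b c) ↔
    (∃ u v : GlV l, a = Sum.inl u ∧ b = Sum.inl v ∧ (Gl l).Adj u v) := by
  intro a b
  constructor
  · rintro ⟨hne, c, h1, h2⟩
    match a, b, c with
    | Sum.inr j, _, c => exact absurd h1 (by rintro ⟨⟩)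
    | Sum.inl u, Sum.inr j, c => exact absurd h2 (by rintro ⟨⟩)
    | Sum.inl (Sum.inl m), Sum.inl v, Sum.inl c => exact absurd h1 (by rintro ⟨⟩)
    | Sum.inl u, Sum.inl (Sum.inl m), Sum.inl c => exact absurd h2 (by rintro ⟨⟩)
    | Sum.inl (Sum.inr p), Sum.inl (Sum.inr p'), Sum.inl (Sum.inl m) =>
      refine ⟨_, _, rfl, rfl, ?_⟩
      rw [adj_inr_inr]
      simp only [Dc] at h1 h2
      have hpp := ne_lad (p' := p') (by simpa using hne)
      apply ladAdj_of_val
      have b1 := p.2.isLt; have b2 := p'.2.isLt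
      have b3 := p.1.isLt; have b4 := p'.1.isLt
      simp only [Fin.ext_iff, Fin.val_one, Fin.val_zero] at h1 h2
      omega
    | Sum.inl (Sum.inr p), Sum.inl (Sum.inr p'), Sum.inl (Sum.inr q) =>
      refine ⟨_, _, rfl, rfl, ?_⟩
      rw [adj_inr_inr]
      simp only [Dc] at h1 h2
      have hpp := ne_lad (p' := p') (by simpa using hne)
      apply ladAdj_of_val
      have b1 := p.2.isLt; have b2 := p'.2.isLt; have b5 := q.2.isLt
      have b3 := p.1.isLt; have b4 := p'.1.isLt
      simp only [Fin.ext_iff, Fin.val_one, Fin.val_zero] at h1 h2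
      omega
    | Sum.inl (Sum.inl m), Sum.inl (Sum.inl m'), Sum.inr t =>
      exact ⟨_, _, rfl, rfl, adj_inl_inl.mpr (by simpa using hne)⟩
    | Sum.inl (Sum.inl m), Sum.inl (Sum.inr p), Sum.inr t =>
      simp only [Dc] at h2
      exact ⟨_, _, rfl, rfl, adj_inl_inr.mpr h2⟩
    | Sum.inl (Sum.inr p), Sum.inl (Sum.inl m), Sum.inr t =>
      simp only [Dc] at h1
      exact ⟨_, _, rfl, rfl, (adj_inl_inr.mpr h1).symm⟩
    | Sum.inl (Sum.inr p), Sum.inl (Sum.inr p'), Sum.inr t =>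
      simp only [Dc] at h1 h2
      exact absurd (by rw [h1, h2]) hne
  · rintro ⟨u, v, rfl, rfl, h⟩
    refine ⟨by simpa using h.ne, ?_⟩
    match u, v with
    | Sum.inl a, Sum.inl b => exact ⟨Sum.inr 0, trivial, trivial⟩
    | Sum.inl a, Sum.inr p => exact ⟨Sum.inr 0, trivial, adj_inl_inr.mp h⟩
    | Sum.inr p, Sum.inl a => exact ⟨Sum.inr 0, adj_inl_inr.mp h.symm, trivial⟩
    | Sum.inr p, Sum.inr q =>
      have b3 := p.1.isLt; have b4 := q.1.isLt
      rcases adj_inr_inr.mp h with ⟨h1, h2⟩ | ⟨h1, h2⟩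
      · by_cases hlt : (p.1 : ℕ) < l
        · refine ⟨Sum.inl (Sum.inr (⟨(p.1 : ℕ) + 1, by omega⟩, 0)), Or.inl ⟨rfl, rfl⟩,
            Or.inl ⟨rfl, ?_⟩⟩
          simp [← h1]
        · refine ⟨Sum.inl (Sum.inl 0), Or.inr ⟨rfl, by omega⟩,
            Or.inr ⟨rfl, ?_⟩⟩
          have : (q.1 : ℕ) = p.1 := (congrArg Fin.val h1).symm
          omega
      · rcases fin2cases p.2 with hrow | hrow <;>
          have hrow' : q.2 = p.2 := h1.symm
        · rcases h2 with e | e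
          · exact ⟨Sum.inl (Sum.inr (q.1, 1)), Or.inr ⟨rfl, hrow, Or.inl e⟩,
              Or.inr ⟨rfl, hrow'.trans hrow, Or.inr rfl⟩⟩
          · exact ⟨Sum.inl (Sum.inr (p.1, 1)), Or.inr ⟨rfl, hrow, Or.inr rfl⟩,
              Or.inr ⟨rfl, hrow'.trans hrow, Or.inl e⟩⟩
        · rcases h2 with e | e
          · exact ⟨Sum.inl (Sum.inl q.1), Or.inl ⟨hrow, Or.inl e, by omega⟩,
              Or.inl ⟨hrow'.trans hrow, Or.inr rfl, by omega⟩⟩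
          · exact ⟨Sum.inl (Sum.inl p.1), Or.inl ⟨hrow, Or.inr rfl, by omega⟩,
              Or.inl ⟨hrow'.trans hrow, Or.inl e, by omega⟩⟩

end Comp2
section KLower
variable {l : ℕ}

/-- every vertex of `G_l` has a neighbor -/
lemma exists_neighbor (u : GlV l) : ∃ v, (Gl l).Adj u v := by
  match u with
  | Sum.inl a => exact ⟨Sum.inr (0, 0), adj_inl_inr.mpr rfl⟩
  | Sum.inr p =>
    refine ⟨Sum.inr (p.1, ⟨1 - (p.2 : ℕ), by omega⟩), adj_inr_inr.mpr (Or.inl ⟨rfl, ?_⟩)⟩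
    intro hc
    have h1 : (p.2 : ℕ) = 1 - (p.2 : ℕ) := congrArg Fin.val hc
    have h2 := p.2.isLt
    omega

lemma k_not_zero :
    ¬ ∃ D : (GlV l ⊕ Fin 0) → (GlV l ⊕ Fin 0) → Prop,
      (∀ x, ¬ Relation.TransGen D x x) ∧
      (∀ a b, (a ≠ b ∧ ∃ c, D a c ∧ D b c) ↔
        (∃ u v : GlV l, a = Sum.inl u ∧ b = Sum.inl v ∧ (Gl l).Adj u v)) := by
  rintro ⟨D, hac, hiff⟩
  -- there is a sink
  have hsink : ∃ x, ∀ y, ¬ D x y := by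
    by_contra hc
    push_neg at hc
    choose f hf using hc
    obtain ⟨x, hx⟩ := cycle_of_pred (R := fun a b => D b a) f (fun x => hf x)
    exact hac x ((Relation.transGen_swap).mp hx)
  obtain ⟨x, hx⟩ := hsink
  match x with
  | Sum.inr j => exact j.elim0
  | Sum.inl u =>
    obtain ⟨v, hv⟩ := exists_neighbor u
    obtain ⟨-, c, hc, -⟩ := (hiff (Sum.inl u) (Sum.inl v)).mpr ⟨u, v, rfl, rfl, hv⟩
    exact hx c hc

end KLower

section PhyLower
variable {l : ℕ}

/-- index type for ladder edges -/
abbrev EIdx (l : ℕ) := Fin (l+1) ⊕ (Fin l ⊕ Fin l)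

def E1 (l : ℕ) : EIdx l → Fin (l+1) × Fin 2
  | Sum.inl i => (i, 0)
  | Sum.inr (Sum.inl i) => (i.castSucc, 0)
  | Sum.inr (Sum.inr i) => (i.castSucc, 1)

def E2 (l : ℕ) : EIdx l → Fin (l+1) × Fin 2
  | Sum.inl i => (i, 1)
  | Sum.inr (Sum.inl i) => (i.succ, 0)
  | Sum.inr (Sum.inr i) => (i.succ, 1)

@[simp] lemma E1_rung (i : Fin (l+1)) : E1 l (Sum.inl i) = (i, 0) := rfl
@[simp] lemma E1_bot (i : Fin l) : E1 l (Sum.inr (Sum.inl i)) = (i.castSucc, 0) := rfl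
@[simp] lemma E1_top (i : Fin l) : E1 l (Sum.inr (Sum.inr i)) = (i.castSucc, 1) := rfl
@[simp] lemma E2_rung (i : Fin (l+1)) : E2 l (Sum.inl i) = (i, 1) := rfl
@[simp] lemma E2_bot (i : Fin l) : E2 l (Sum.inr (Sum.inl i)) = (i.succ, 0) := rfl
@[simp] lemma E2_top (i : Fin l) : E2 l (Sum.inr (Sum.inr i)) = (i.succ, 1) := rfl

lemma E_adj (e : EIdx l) : ladAdj l (E1 l e) (E2 l e) := by
  match e with
  | Sum.inl i =>
    refine Or.inl ⟨rfl, fun hc => ?_⟩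
    have : (0 : ℕ) = 1 := congrArg Fin.val hc
    omega
  | Sum.inr (Sum.inl i) => exact Or.inr ⟨rfl, Or.inl (by simp)⟩
  | Sum.inr (Sum.inr i) => exact Or.inr ⟨rfl, Or.inl (by simp)⟩

lemma E_ne (e : EIdx l) : E1 l e ≠ E2 l e := ladAdj_ne (E_adj e)

/-- measure separating the two endpoints -/
lemma E_lt (e : EIdx l) :
    2 * ((E1 l e).1 : ℕ) + (E1 l e).2 < 2 * ((E2 l e).1 : ℕ) + (E2 l e).2 := by
  match e with
  | Sum.inl i => simp
  | Sum.inr (Sum.inl i) => simp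
  | Sum.inr (Sum.inr i) => simp

lemma E_inj {e e' : EIdx l}
    (h : (E1 l e = E1 l e' ∧ E2 l e = E2 l e') ∨ (E1 l e = E2 l e' ∧ E2 l e = E1 l e')) :
    e = e' := by
  rcases h with ⟨h1, h2⟩ | ⟨h1, h2⟩
  · match e, e' with
    | Sum.inl i, Sum.inl i' =>
      simp only [E1_rung, Prod.mk.injEq] at h1
      rw [h1.1]
    | Sum.inl i, Sum.inr (Sum.inl i') =>
      simp only [E2_rung, E2_bot, Prod.mk.injEq] at h2
      exact absurd h2.2 (by decide)
    | Sum.inl i, Sum.inr (Sum.inr i') =>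
      simp only [E1_rung, E1_top, Prod.mk.injEq] at h1
      exact absurd h1.2 (by decide)
    | Sum.inr (Sum.inl i), Sum.inl i' =>
      simp only [E2_rung, E2_bot, Prod.mk.injEq] at h2
      exact absurd h2.2 (by decide)
    | Sum.inr (Sum.inr i), Sum.inl i' =>
      simp only [E1_rung, E1_top, Prod.mk.injEq] at h1
      exact absurd h1.2 (by decide)
    | Sum.inr (Sum.inl i), Sum.inr (Sum.inr i') =>
      simp only [E1_bot, E1_top, Prod.mk.injEq] at h1
      exact absurd h1.2 (by decide)
    | Sum.inr (Sum.inr i), Sum.inr (Sum.inl i') =>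
      simp only [E1_bot, E1_top, Prod.mk.injEq] at h1
      exact absurd h1.2 (by decide)
    | Sum.inr (Sum.inl i), Sum.inr (Sum.inl i') =>
      simp only [E1_bot, Prod.mk.injEq, Fin.castSucc_inj] at h1
      rw [h1.1]
    | Sum.inr (Sum.inr i), Sum.inr (Sum.inr i') =>
      simp only [E1_top, Prod.mk.injEq, Fin.castSucc_inj] at h1
      rw [h1.1]
  · exfalso
    have a1 := E_lt e
    have a2 := E_lt e'
    rw [h1, h2] at a1
    omega

end PhyLower
section PhyLower2
variable {l : ℕ}

lemma phy_lower {r : ℕ} {D : (GlV l ⊕ Fin r) → (GlV l ⊕ Fin r) → Prop}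
    (hD : IsPhyDigraphOn (Gl l) r D) : l ≤ r := by
  classical
  obtain ⟨hac, hiff, -⟩ := hD
  set lad : Fin (l+1) × Fin 2 → (GlV l ⊕ Fin r) := fun p => Sum.inl (Sum.inr p) with hlad
  have arc_ne : ∀ x, ¬ D x x := fun x h => hac x (Relation.TransGen.single h)
  have arc_adj : ∀ {u v : GlV l}, D (Sum.inl u) (Sum.inl v) → (Gl l).Adj u v := by
    intro u v h
    refine (hiff u v).mpr ⟨?_, Or.inl h⟩
    rintro heq
    rw [heq] at h
    exact arc_ne _ h
  have prey_adj : ∀ {u v : GlV l} {w}, D (Sum.inl u) w → D (Sum.inl v) w → u ≠ v →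
      (Gl l).Adj u v := by
    intro u v w h1 h2 hne
    exact (hiff u v).mpr ⟨by simpa using hne, Or.inr (Or.inr ⟨w, h1, h2⟩)⟩
  -- the assignment of each ladder edge to a head vertex or an extra vertex
  have hex : ∀ e : EIdx l, ∃ t : (Fin (l+1) × Fin 2) ⊕ Fin r,
      (∃ p q, t = Sum.inl p ∧
        ((p = E1 l e ∧ q = E2 l e) ∨ (p = E2 l e ∧ q = E1 l e)) ∧ D (lad q) (lad p)) ∨
      (∃ j, t = Sum.inr j ∧ D (lad (E1 l e)) (Sum.inr j) ∧ D (lad (E2 l e)) (Sum.inr j)) := by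
    intro e
    obtain ⟨-, harc⟩ := (hiff _ _).mp (adj_inr_inr.mpr (E_adj e))
    rcases harc with h | h | ⟨w, hw1, hw2⟩
    · exact ⟨Sum.inl (E2 l e), Or.inl ⟨_, _, rfl, Or.inr ⟨rfl, rfl⟩, h⟩⟩
    · exact ⟨Sum.inl (E1 l e), Or.inl ⟨_, _, rfl, Or.inl ⟨rfl, rfl⟩, h⟩⟩
    · match w, hw1, hw2 with
      | Sum.inl (Sum.inl a), hw1, hw2 =>
        exfalso
        have e1 : E1 l e = (0, 0) := adj_inl_inr.mp (arc_adj hw1).symm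
        have e2 : E2 l e = (0, 0) := adj_inl_inr.mp (arc_adj hw2).symm
        exact E_ne e (e1.trans e2.symm)
      | Sum.inl (Sum.inr q), hw1, hw2 =>
        exact absurd ⟨(arc_adj hw1).symm, (arc_adj hw2).symm⟩ (noTri (E_adj e) (Sum.inr q))
      | Sum.inr j, hw1, hw2 => exact ⟨Sum.inr j, Or.inr ⟨j, rfl, hw1, hw2⟩⟩
  choose ψ hψ using hex
  -- injectivity
  have hinj : Function.Injective ψ := by
    intro e e' heq
    by_contra hnee
    rcases hψ e with ⟨p, q, ht, hpq, harc⟩ | ⟨j, ht, h1, h2⟩ <;>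
      rcases hψ e' with ⟨p', q', ht', hpq', harc'⟩ | ⟨j', ht', h1', h2'⟩
    · rw [heq, ht'] at ht
      have hpp : p = p' := by simpa using ht.symm
      subst hpp
      by_cases hqq : q = q'
      · subst hqq
        refine hnee (E_inj ?_)
        rcases hpq with ⟨a1, a2⟩ | ⟨a1, a2⟩ <;> rcases hpq' with ⟨b1, b2⟩ | ⟨b1, b2⟩
        · exact Or.inl ⟨a1.symm.trans b1, a2.symm.trans b2⟩
        · exact Or.inr ⟨a1.symm.trans b1, a2.symm.trans b2⟩
        · exact Or.inr ⟨a2.symm.trans b2, a1.symm.trans b1⟩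
        · exact Or.inl ⟨a2.symm.trans b2, a1.symm.trans b1⟩
      · have hadj : (Gl l).Adj (Sum.inr q) (Sum.inr q') :=
          prey_adj harc harc' (by simpa using hqq)
        refine noTri (adj_inr_inr.mp hadj) (Sum.inr p) ⟨(arc_adj harc).symm, (arc_adj harc').symm⟩
    · rw [heq, ht'] at ht; exact absurd ht (by simp)
    · rw [heq, ht'] at ht; exact absurd ht (by simp)
    · rw [heq, ht'] at ht
      have hjj : j = j' := by simpa using ht.symm
      subst hjj
      -- find an endpoint of e' not an endpoint of e
      have hx : ∃ x, (x = E1 l e' ∨ x = E2 l e') ∧ x ≠ E1 l e ∧ x ≠ E2 l e := by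
        by_contra hcx
        push_neg at hcx
        have c1 : E1 l e' = E1 l e ∨ E1 l e' = E2 l e := by
          by_cases hd : E1 l e' = E1 l e
          · exact Or.inl hd
          · exact Or.inr (hcx _ (Or.inl rfl) hd)
        have c2 : E2 l e' = E1 l e ∨ E2 l e' = E2 l e := by
          by_cases hd : E2 l e' = E1 l e
          · exact Or.inl hd
          · exact Or.inr (hcx _ (Or.inr rfl) hd)
        have hne' := E_ne e'
        rcases c1 with c1 | c1 <;> rcases c2 with c2 | c2
        · exact hne' (c1.trans c2.symm)
        · exact hnee (E_inj (Or.inl ⟨c1.symm, c2.symm⟩))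
        · exact hnee (E_inj (Or.inr ⟨c2.symm, c1.symm⟩))
        · exact hne' (c1.trans c2.symm)
      obtain ⟨x, hx1, hx2, hx3⟩ := hx
      have harcx : D (lad x) (Sum.inr j) := by
        rcases hx1 with rfl | rfl
        · exact h1'
        · exact h2'
      have a1 : (Gl l).Adj (Sum.inr x) (Sum.inr (E1 l e)) :=
        prey_adj harcx h1 (by simpa using hx2)
      have a2 : (Gl l).Adj (Sum.inr x) (Sum.inr (E2 l e)) :=
        prey_adj harcx h2 (by simpa using hx3)
      exact noTri (E_adj e) (Sum.inr x) ⟨a1, a2⟩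
  -- a ladder vertex missed by ψ
  have hmiss : ∃ p0 : Fin (l+1) × Fin 2, ∀ e, ψ e ≠ Sum.inl p0 := by
    by_contra hc
    push_neg at hc
    have hpred : ∀ p : Fin (l+1) × Fin 2, ∃ q, D (lad q) (lad p) := by
      intro p
      obtain ⟨e, he⟩ := hc p
      rcases hψ e with ⟨p1, q1, ht, hpq, harc⟩ | ⟨j, ht, -, -⟩
      · rw [he] at ht
        have : p1 = p := by simpa using ht.symm
        exact ⟨q1, this ▸ harc⟩
      · rw [he] at ht; exact absurd ht (by simp)
    choose f hf using hpred
    obtain ⟨x, hx⟩ := cycle_of_pred (R := fun a b => D (lad a) (lad b)) f hf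
    exact hac (lad x) (transGen_lift lad (fun a b h => h) hx)
  obtain ⟨p0, hp0⟩ := hmiss
  -- counting
  have hcard := Fintype.card_le_of_injective
    (Sum.elim ψ (fun _ : Unit => Sum.inl p0) : EIdx l ⊕ Unit → (Fin (l+1) × Fin 2) ⊕ Fin r) ?_
  · simp only [Fintype.card_sum, Fintype.card_prod, Fintype.card_fin, Fintype.card_unit] at hcard
    omega
  · rintro (e | u) (e' | u') h
    · rw [hinj h]
    · exact absurd h (hp0 e)
    · exact absurd h.symm (hp0 e')
    · rfl

end PhyLower2
theorem stmt18 (l : ℕ) (hl : 0 < l) :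
    phylogenyNumber (Gl l) = l ∧ competitionNumber (Gl l) = 1 := by
  constructor
  · have hmem : l ∈ {r | ∃ D, IsPhyDigraphOn (Gl l) r D} := ⟨Dp l, Dp_isPhy⟩
    refine le_antisymm (Nat.sInf_le hmem) (le_csInf ⟨l, hmem⟩ ?_)
    rintro r ⟨D, hD⟩
    exact phy_lower hD
  · have hmem : 1 ∈ {k | ∃ D : (GlV l ⊕ Fin k) → (GlV l ⊕ Fin k) → Prop,
        (∀ x, ¬ Relation.TransGen D x x) ∧
        (∀ a b, (a ≠ b ∧ ∃ c, D a c ∧ D b c) ↔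
          (∃ u v : GlV l, a = Sum.inl u ∧ b = Sum.inl v ∧ (Gl l).Adj u v))} :=
      ⟨Dc l, Dc_acyclic, Dc_comp⟩
    refine le_antisymm (Nat.sInf_le hmem) ?_
    rcases Nat.eq_zero_or_pos (competitionNumber (Gl l)) with h0 | h1
    · exfalso
      have := Nat.sInf_mem (⟨1, hmem⟩ : Set.Nonempty _)
      rw [competitionNumber] at h0
      rw [h0] at this
      exact k_not_zero this
    · exact h1
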